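/- arXiv:1811.04625 — 2 statements merged into one kernel-verified Lean document; each statement's English description precedes it below -/
import Mathlib

section
/- Let n ≥ 1, let A₂ be a Latin square of order n, let B₁, B₂ be a pair of orthogonal Latin squares of order n, and let C_α, C_β be Latin squares of order n, all indexed by [n] = {0, 1, …, n−1}. Define the arrays ℬ₂((p,r),(q,c)) = (A₂(p,q), B₂(r,c)) and 𝒳_{α,β}((p,r),(q,c)) = (C_α(p, B₁(r,c)), C_β(q, B₂(r,c))) on the index set [n] × [n]. Then the Latin squares ℬ₂ and 𝒳_{α,β} of order n² are orthogonal. -/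
/-!
The superimposed symbol `(A₂(p,q), B₂(r,c), C_α(p,B₁(r,c)), C_β(q,B₂(r,c)))` determines the cell
`((p,r),(q,c))`: knowing `B₂(r,c)`, the column of `C_β` gives `q`; then the column of `A₂` gives `p`;
the row `p` of `C_α` gives `B₁(r,c)`; and orthogonality of `B₁, B₂` gives `(r,c)`. On a finite
index set this injectivity is already orthogonality.
-/

/-- A Latin square on an index/symbol set `α`: every row and every column is a bijection. -/
def IsLatinSquare {α : Type*} (L : α → α → α) : Prop :=
  (∀ r, Function.Bijective (fun c => L r c)) ∧
  (∀ c, Function.Bijective (fun r => L r c))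

/-- Two Latin squares (as arrays) are orthogonal if superimposing them gives a bijection. -/
def IsOrthogonal {α : Type*} (L₁ L₂ : α → α → α) : Prop :=
  Function.Bijective (fun rc : α × α => (L₁ rc.1 rc.2, L₂ rc.1 rc.2))

theorem isOrthogonal_iff_injective {α : Type*} [Finite α] {L₁ L₂ : α → α → α} :
    IsOrthogonal L₁ L₂ ↔ Function.Injective (fun rc : α × α => (L₁ rc.1 rc.2, L₂ rc.1 rc.2)) :=
  Finite.injective_iff_bijective.symm

namespace IsLatinSquare

variable {α : Type*} {L : α → α → α}

theorem injective_row (hL : IsLatinSquare L) (r : α) : Function.Injective (L r) :=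
  (hL.1 r).1

theorem injective_col (hL : IsLatinSquare L) (c : α) : Function.Injective (fun r => L r c) :=
  (hL.2 c).1

end IsLatinSquare

section ProductConstruction

variable {α : Type*}

def prodSquare (A B : α → α → α) (pr qc : α × α) : α × α :=
  (A pr.1 qc.1, B pr.2 qc.2)

def twistedSquare (B₁ B₂ Cα Cβ : α → α → α) (pr qc : α × α) : α × α :=
  (Cα pr.1 (B₁ pr.2 qc.2), Cβ qc.1 (B₂ pr.2 qc.2))

theorem isOrthogonal_prodSquare_twistedSquare [Finite α] {A B₁ B₂ Cα Cβ : α → α → α}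
    (hA : IsLatinSquare A) (hB : IsOrthogonal B₁ B₂)
    (hCα : IsLatinSquare Cα) (hCβ : IsLatinSquare Cβ) :
    IsOrthogonal (prodSquare A B₂) (twistedSquare B₁ B₂ Cα Cβ) := by
  rw [isOrthogonal_iff_injective]
  rintro ⟨⟨p, r⟩, q, c⟩ ⟨⟨p', r'⟩, q', c'⟩ h
  simp only [prodSquare, twistedSquare, Prod.mk.injEq] at h
  obtain ⟨⟨hAeq, hB₂eq⟩, hCαeq, hCβeq⟩ := h
  obtain rfl : q = q' := hCβ.injective_col _ (by rwa [hB₂eq] at hCβeq)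
  obtain rfl : p = p' := hA.injective_col q hAeq
  have hB₁eq : B₁ r c = B₁ r' c' := hCα.injective_row p hCαeq
  obtain ⟨rfl, rfl⟩ : r = r' ∧ c = c' := Prod.mk.inj (hB.1 (Prod.ext hB₁eq hB₂eq))
  rfl

end ProductConstruction

theorem stmt_12_general (n : ℕ)
    (A₂ : Fin n → Fin n → Fin n) (hA₂ : IsLatinSquare A₂)
    (B₁ B₂ : Fin n → Fin n → Fin n)
    (hB : IsOrthogonal B₁ B₂)
    (Cα Cβ : Fin n → Fin n → Fin n)
    (hCα : IsLatinSquare Cα) (hCβ : IsLatinSquare Cβ)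
    (calB₂ : (Fin n × Fin n) → (Fin n × Fin n) → (Fin n × Fin n))
    (hcalB₂ : ∀ pr qc, calB₂ pr qc = (A₂ pr.1 qc.1, B₂ pr.2 qc.2))
    (Xαβ : (Fin n × Fin n) → (Fin n × Fin n) → (Fin n × Fin n))
    (hXαβ : ∀ pr qc, Xαβ pr qc =
      (Cα pr.1 (B₁ pr.2 qc.2), Cβ qc.1 (B₂ pr.2 qc.2))) :
    IsOrthogonal calB₂ Xαβ := by
  obtain rfl : calB₂ = prodSquare A₂ B₂ := funext₂ hcalB₂
  obtain rfl : Xαβ = twistedSquare B₁ B₂ Cα Cβ := funext₂ hXαβ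
  exact isOrthogonal_prodSquare_twistedSquare hA₂ hB hCα hCβ

/-- The Latin squares `ℬ₂((p,r),(q,c)) = (A₂(p,q), B₂(r,c))` and
`𝒳_{α,β}((p,r),(q,c)) = (C_α(p,B₁(r,c)), C_β(q,B₂(r,c)))` of order `n²` are orthogonal. -/
theorem stmt_12 (n : ℕ) (hn : 1 ≤ n)
    (A₂ : Fin n → Fin n → Fin n) (hA₂ : IsLatinSquare A₂)
    (B₁ B₂ : Fin n → Fin n → Fin n)
    (hB₁ : IsLatinSquare B₁) (hB₂ : IsLatinSquare B₂) (hB : IsOrthogonal B₁ B₂)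
    (Cα Cβ : Fin n → Fin n → Fin n)
    (hCα : IsLatinSquare Cα) (hCβ : IsLatinSquare Cβ)
    (calB₂ : (Fin n × Fin n) → (Fin n × Fin n) → (Fin n × Fin n))
    (hcalB₂ : ∀ pr qc, calB₂ pr qc = (A₂ pr.1 qc.1, B₂ pr.2 qc.2))
    (Xαβ : (Fin n × Fin n) → (Fin n × Fin n) → (Fin n × Fin n))
    (hXαβ : ∀ pr qc, Xαβ pr qc =
      (Cα pr.1 (B₁ pr.2 qc.2), Cβ qc.1 (B₂ pr.2 qc.2))) :
    IsOrthogonal calB₂ Xαβ :=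
  stmt_12_general n A₂ hA₂ B₁ B₂ hB Cα Cβ hCα hCβ calB₂ hcalB₂ Xαβ hXαβ
end

section
/- Let n ≥ 1 and t ≥ 2. If there exists a set of t mutually orthogonal Latin squares of order n, then there exists a set of t+2 mutually orthogonal Latin squares of order n²; that is, MOLS(n²) ≥ MOLS(n) + 2. -/
/-!
Any `t + 2` pairwise orthogonal maps `X → β` (an orthogonal array) give `t` MOLS on `β`, using
two of them as coordinates on `X`. For squares `C₁, …, Cₜ` of order `n` and `i ≠ j`, the `t + 4`
maps `[n]⁴ → [n]²`
  `(a, b, c, d) ↦ (a, Cᵢ(b, c))`, `(d, Cⱼ(b, c))`, `(Cₖ(a, c), Cₖ(b, d))` for each `k`,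
  `(Cᵢ(a, d), b)`, `(Cⱼ(a, d), c)`
are pairwise orthogonal: the values of any two of them determine `(a, b, c, d)` by cancelling with
the Latin property of the `Cₖ` and their pairwise orthogonality.
-/

open Function

theorem bijective_of_bijective_shear {α β γ : Type*} {f : α → β → γ}
    (h : Bijective fun p : α × β => (p.1, f p.1 p.2)) (a : α) : Bijective (f a) := by
  refine ⟨fun b b' hb => (Prod.ext_iff.mp (h.1 (a₁ := (a, b)) (a₂ := (a, b')) (Prod.ext rfl hb))).2,
    fun c => ?_⟩
  obtain ⟨⟨a', b⟩, hp⟩ := h.2 (a, c)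
  obtain ⟨rfl, rfl⟩ := Prod.ext_iff.mp hp
  exact ⟨b, rfl⟩

theorem IsLatinSquare.injective_right {α : Type*} {L : α → α → α} (h : IsLatinSquare L) (r : α) :
    Injective (L r) :=
  (h.1 r).injective

theorem IsLatinSquare.injective_left {α : Type*} {L : α → α → α} (h : IsLatinSquare L) (c : α) :
    Injective (L · c) :=
  (h.2 c).injective

theorem IsOrthogonal.eq_of_eq {α : Type*} {L₁ L₂ : α → α → α} (h : IsOrthogonal L₁ L₂)
    {r c r' c' : α} (h₁ : L₁ r c = L₁ r' c') (h₂ : L₂ r c = L₂ r' c') : r = r' ∧ c = c' :=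
  Prod.ext_iff.mp (h.1 (a₁ := (r, c)) (a₂ := (r', c')) (Prod.ext h₁ h₂))

def IsMOLS {ι α : Type*} (D : ι → α → α → α) : Prop :=
  (∀ k, IsLatinSquare (D k)) ∧ Pairwise fun k l => IsOrthogonal (D k) (D l)

theorem IsMOLS.map {ι κ α β : Type*} {D : ι → α → α → α} (hD : IsMOLS D) (σ : ι ≃ κ) (π : α ≃ β) :
    IsMOLS fun k r c => π (D (σ.symm k) (π.symm r) (π.symm c)) := by
  refine ⟨fun k => ⟨fun r => ?_, fun c => ?_⟩, fun k l hkl => ?_⟩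
  · exact (π.bijective.comp ((hD.1 _).1 _)).comp π.symm.bijective
  · exact (π.bijective.comp ((hD.1 _).2 _)).comp π.symm.bijective
  · exact ((Equiv.prodCongr π π).bijective.comp (hD.2 (σ.symm.injective.ne hkl))).comp
      (Equiv.prodCongr π.symm π.symm).bijective

def IsOrthogonalFun {X β : Type*} (f g : X → β) : Prop :=
  Bijective fun x => (f x, g x)

def IsOrthogonalArray {ι X β : Type*} (F : ι → X → β) : Prop :=
  Pairwise fun a b => IsOrthogonalFun (F a) (F b)

theorem isOrthogonalFun_iff_injective {β : Type*} [Finite β] {f g : β × β → β} :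
    IsOrthogonalFun f g ↔ Injective fun x => (f x, g x) :=
  Finite.injective_iff_bijective.symm

theorem IsOrthogonalArray.exists_isMOLS {κ X β : Type*} {F : Fin 2 ⊕ κ → X → β}
    (hF : IsOrthogonalArray F) : ∃ D : κ → β → β → β, IsMOLS D := by
  set e := Equiv.ofBijective _ (@hF (.inl 0) (.inl 1) (by simp))
  have he₀ : ∀ p, F (.inl 0) (e.symm p) = p.1 := fun p => congrArg Prod.fst (e.apply_symm_apply p)
  have he₁ : ∀ p, F (.inl 1) (e.symm p) = p.2 := fun p => congrArg Prod.snd (e.apply_symm_apply p)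
  refine ⟨fun k r c => F (.inr k) (e.symm (r, c)), fun k => ⟨?_, ?_⟩, fun k l hkl => ?_⟩
  · refine bijective_of_bijective_shear (f := fun r c => F (.inr k) (e.symm (r, c))) ?_
    convert (@hF (.inl 0) (.inr k) (by simp)).comp e.symm.bijective using 2 with p
    simp [he₀]
  · refine bijective_of_bijective_shear (f := fun c r => F (.inr k) (e.symm (r, c))) ?_
    convert ((@hF (.inl 1) (.inr k) (by simp)).comp e.symm.bijective).comp
      (Equiv.prodComm β β).bijective using 2 with p
    simp [he₁, Prod.swap]
  · exact (hF (Sum.inr_injective.ne hkl)).comp e.symm.bijective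

section SquareArray

variable {ι α : Type*} (C : ι → α → α → α) (i j : ι)

def squareArray : Fin 2 ⊕ (ι ⊕ Fin 2) → (α × α) × (α × α) → α × α
  | .inl 0, ((a, b), (c, _)) => (a, C i b c)
  | .inl 1, ((_, b), (c, d)) => (d, C j b c)
  | .inr (.inl k), ((a, b), (c, d)) => (C k a c, C k b d)
  | .inr (.inr 0), ((a, b), (_, d)) => (C i a d, b)
  | .inr (.inr 1), ((a, _), (c, d)) => (C j a d, c)

theorem isOrthogonalArray_squareArray [Finite α] (hC : IsMOLS C) (hij : i ≠ j) :
    IsOrthogonalArray (squareArray C i j) := by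
  have row : ∀ k r c c', C k r c = C k r c' → c = c' := fun k r _ _ h =>
    (hC.1 k).injective_right r h
  have col : ∀ k r r' c, C k r c = C k r' c → r = r' := fun k _ _ c h =>
    (hC.1 k).injective_left c h
  have orth : ∀ k l, k ≠ l → ∀ r c r' c', C k r c = C k r' c' → C l r c = C l r' c' →
      r = r' ∧ c = c' := fun k l hkl _ _ _ _ => (hC.2 hkl).eq_of_eq
  rintro (a | k | a) (b | l | b) hab
  all_goals try fin_cases a
  all_goals try fin_cases b
  all_goals simp only [ne_eq, Sum.inr.injEq, Sum.inl.injEq, not_true_eq_false] at hab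
  all_goals
    rw [isOrthogonalFun_iff_injective]
    rintro ⟨⟨a, b⟩, c, d⟩ ⟨⟨a', b'⟩, c', d'⟩ h
    simp only [squareArray, Prod.mk.injEq] at h
    grind

end SquareArray

theorem stmt_13_general (n t : ℕ) (ht : 2 ≤ t)
    (C : Fin t → Fin n → Fin n → Fin n)
    (hC : ∀ k, IsLatinSquare (C k))
    (hCorth : ∀ k l, k ≠ l → IsOrthogonal (C k) (C l)) :
    ∃ D : Fin (t + 2) → Fin (n ^ 2) → Fin (n ^ 2) → Fin (n ^ 2),
      (∀ k, IsLatinSquare (D k)) ∧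
      (∀ k l, k ≠ l → IsOrthogonal (D k) (D l)) := by
  have hC' : IsMOLS C := ⟨hC, fun k l => hCorth k l⟩
  obtain ⟨D, hD⟩ := (isOrthogonalArray_squareArray C ⟨0, by omega⟩ ⟨1, by omega⟩ hC'
    (by simp [Fin.ext_iff])).exists_isMOLS
  obtain ⟨hL, hO⟩ := hD.map finSumFinEquiv (finProdFinEquiv.trans (finCongr (sq n).symm))
  exact ⟨_, hL, fun _ _ hkl => hO hkl⟩

/-- If there exist `t ≥ 2` MOLS of order `n`, then there exist `t+2` MOLS of order `n²`;
that is, MOLS(n²) ≥ MOLS(n) + 2. -/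
theorem stmt_13 (n t : ℕ) (hn : 1 ≤ n) (ht : 2 ≤ t)
    (C : Fin t → Fin n → Fin n → Fin n)
    (hC : ∀ k, IsLatinSquare (C k))
    (hCorth : ∀ k l, k ≠ l → IsOrthogonal (C k) (C l)) :
    ∃ D : Fin (t + 2) → Fin (n ^ 2) → Fin (n ^ 2) → Fin (n ^ 2),
      (∀ k, IsLatinSquare (D k)) ∧
      (∀ k l, k ≠ l → IsOrthogonal (D k) (D l)) :=
  stmt_13_general n t ht C hC hCorth
end
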